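/- arXiv:1406.6474 — 2 statements merged into one kernel-verified Lean document; each statement's English description precedes it below -/
import Mathlib

section
/- Let U and V be linear subspaces of ℝ^D and let u ∈ U ∩ (U ∩ V)^⊥ with u ≠ 0. Then: (a) ‖Π_V u‖ ≤ c_F(U,V) ‖u‖; (b) κ(u) ≤ (1 − c_F(U,V)²)^{−1/2}; and (c) κ(u) = (1 − c_F(U,V)²)^{−1/2} if and only if ‖Π_V u‖ = c_F(U,V) ‖u‖. Here κ is taken with respect to P = U and Q = V, so that κ(u) = d(u, U ∩ V)/max{d(u,U), d(u,V)} = ‖u‖/d(u,V) = (1 − ‖Π_V u‖²/‖u‖²)^{−1/2}. -/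
/-!
Because `u ∈ U` and `u ⊥ U ⊓ V`, the three distances are `d(u, U) = 0`, `d(u, U ⊓ V) = ‖u‖` and
`d(u, V) = ‖u - Π_V u‖ = √(‖u‖² - ‖Π_V u‖²)`, so `κ(u) = f (‖Π_V u‖ / ‖u‖)` with
`f t = (1 - t²)^(-1/2)`, which is strictly increasing on `[0, 1)`. The projection `Π_V u` is again
orthogonal to `U ⊓ V`, hence `‖Π_V u‖² = ⟪u, Π_V u⟫ ≤ c_F ‖u‖ ‖Π_V u‖`, which is (a); (b) and (c)
are monotonicity and injectivity of `f`. For this one needs `c_F < 1`: in finite dimension the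
supremum defining `c_F` is attained, and `⟪x, y⟫ = 1` with `‖x‖, ‖y‖ ≤ 1` forces
`x = y ∈ (U ⊓ V) ⊓ (U ⊓ V)ᗮ = 0`.
-/

open scoped RealInnerProductSpace
open Metric

noncomputable section

/-- The cosine of the Friedrichs angle between two subspaces. -/
def friedrichs {H : Type*} [NormedAddCommGroup H] [InnerProductSpace ℝ H]
    (U V : Submodule ℝ H) : ℝ :=
  sSup {t | ∃ u ∈ U ⊓ (U ⊓ V)ᗮ, ∃ v ∈ V ⊓ (U ⊓ V)ᗮ,
    ‖u‖ ≤ 1 ∧ ‖v‖ ≤ 1 ∧ t = ⟪u, v⟫}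

namespace Submodule

section Projection

variable {𝕜 E : Type*} [RCLike 𝕜] [NormedAddCommGroup E] [InnerProductSpace 𝕜 E]

theorem infDist_eq_norm_sub_starProjection (K : Submodule 𝕜 E) [K.HasOrthogonalProjection]
    (x : E) : infDist x (K : Set E) = ‖x - K.starProjection x‖ := by
  rw [starProjection_minimal, infDist_eq_iInf]
  simp only [dist_eq_norm]
  rfl

theorem infDist_eq_norm_of_mem_orthogonal {K : Submodule 𝕜 E} [K.HasOrthogonalProjection]
    {x : E} (hx : x ∈ Kᗮ) : infDist x (K : Set E) = ‖x‖ := by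
  rw [infDist_eq_norm_sub_starProjection, (starProjection_apply_eq_zero_iff K).mpr hx, sub_zero]

theorem starProjection_mem_orthogonal_of_le {W K : Submodule 𝕜 E} [K.HasOrthogonalProjection]
    (hWK : W ≤ K) {x : E} (hx : x ∈ Wᗮ) : K.starProjection x ∈ Wᗮ := by
  intro w hw
  rw [← inner_starProjection_left_eq_right, starProjection_eq_self_iff.mpr (hWK hw)]
  exact hx w hw

theorem norm_sub_starProjection_sq (K : Submodule 𝕜 E) [K.HasOrthogonalProjection] (x : E) :
    ‖x - K.starProjection x‖ ^ 2 = ‖x‖ ^ 2 - ‖K.starProjection x‖ ^ 2 := by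
  rw [K.norm_sq_eq_add_norm_sq_starProjection x, starProjection_orthogonal_val]
  ring

end Projection

theorem norm_div_norm_sub_starProjection {H : Type*} [NormedAddCommGroup H]
    [InnerProductSpace ℝ H] (K : Submodule ℝ H) [K.HasOrthogonalProjection] {x : H} (hx : x ≠ 0) :
    ‖x‖ / ‖x - K.starProjection x‖ = (√(1 - (‖K.starProjection x‖ / ‖x‖) ^ 2))⁻¹ := by
  have hsq : 1 - (‖K.starProjection x‖ / ‖x‖) ^ 2 = ‖x - K.starProjection x‖ ^ 2 / ‖x‖ ^ 2 := by
    rw [K.norm_sub_starProjection_sq]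
    field_simp [norm_ne_zero_iff.mpr hx]
  rw [hsq, Real.sqrt_div' _ (sq_nonneg _), Real.sqrt_sq (norm_nonneg _),
    Real.sqrt_sq (norm_nonneg _), inv_div]

end Submodule

theorem strictMonoOn_inv_sqrt_one_sub_sq :
    StrictMonoOn (fun t : ℝ => (√(1 - t ^ 2))⁻¹) (Set.Ico 0 1) := by
  intro s ⟨hs0, _⟩ t ⟨_, ht1⟩ hst
  have hsq : s ^ 2 < t ^ 2 := pow_lt_pow_left₀ hst hs0 two_ne_zero
  have ht : 0 < 1 - t ^ 2 := by nlinarith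
  exact (inv_lt_inv₀ (Real.sqrt_pos.mpr (by linarith)) (Real.sqrt_pos.mpr ht)).mpr
    (Real.sqrt_lt_sqrt ht.le (by linarith))

section Friedrichs

variable {H : Type*} [NormedAddCommGroup H] [InnerProductSpace ℝ H] {U V : Submodule ℝ H}

theorem le_friedrichs {x y : H} (hx : x ∈ U ⊓ (U ⊓ V)ᗮ) (hy : y ∈ V ⊓ (U ⊓ V)ᗮ)
    (hx1 : ‖x‖ ≤ 1) (hy1 : ‖y‖ ≤ 1) : ⟪x, y⟫ ≤ friedrichs U V := by
  refine le_csSup ⟨1, ?_⟩ ⟨x, hx, y, hy, hx1, hy1, rfl⟩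
  rintro _ ⟨x, -, y, -, hx1, hy1, rfl⟩
  exact (real_inner_le_norm x y).trans (mul_le_one₀ hx1 (norm_nonneg y) hy1)

theorem friedrichs_nonneg : 0 ≤ friedrichs U V := by
  simpa using le_friedrichs (zero_mem (U ⊓ (U ⊓ V)ᗮ)) (zero_mem (V ⊓ (U ⊓ V)ᗮ))
    (by simp) (by simp)

theorem real_inner_le_friedrichs_mul {x y : H} (hx : x ∈ U ⊓ (U ⊓ V)ᗮ)
    (hy : y ∈ V ⊓ (U ⊓ V)ᗮ) : ⟪x, y⟫ ≤ friedrichs U V * (‖x‖ * ‖y‖) := by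
  rcases eq_or_ne x 0 with rfl | hx0
  · simp
  rcases eq_or_ne y 0 with rfl | hy0
  · simp
  have hxy : 0 < ‖x‖ * ‖y‖ := by positivity
  have := le_friedrichs (Submodule.smul_mem _ ‖x‖⁻¹ hx) (Submodule.smul_mem _ ‖y‖⁻¹ hy)
    (by simp [norm_smul, hx0]) (by simp [norm_smul, hy0])
  rw [real_inner_smul_left, real_inner_smul_right, ← mul_assoc, ← mul_inv] at this
  rwa [inv_mul_le_iff₀ hxy, mul_comm] at this

theorem exists_real_inner_eq_friedrichs [FiniteDimensional ℝ H] :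
    ∃ x ∈ U ⊓ (U ⊓ V)ᗮ, ∃ y ∈ V ⊓ (U ⊓ V)ᗮ, ‖x‖ ≤ 1 ∧ ‖y‖ ≤ 1 ∧ friedrichs U V = ⟪x, y⟫ := by
  let B (W : Submodule ℝ H) : Set H := (W : Set H) ∩ closedBall 0 1
  have hB (W : Submodule ℝ H) : IsCompact (B W) :=
    (isCompact_closedBall 0 1).inter_left W.closed_of_finiteDimensional
  obtain ⟨⟨x, y⟩, ⟨⟨hx, hx1⟩, ⟨hy, hy1⟩⟩, hmax⟩ :=
    ((hB _).prod (hB _)).exists_isMaxOn ⟨(0, 0), ⟨zero_mem _, by simp⟩, ⟨zero_mem _, by simp⟩⟩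
      (continuous_inner (𝕜 := ℝ)).continuousOn
  rw [mem_closedBall_zero_iff] at hx1 hy1
  refine ⟨x, hx, y, hy, hx1, hy1, le_antisymm ?_ (le_friedrichs hx hy hx1 hy1)⟩
  refine csSup_le ⟨0, 0, zero_mem _, 0, zero_mem _, by simp⟩ ?_
  rintro _ ⟨x', hx', y', hy', hx1', hy1', rfl⟩
  exact @hmax (x', y') ⟨⟨hx', by simpa using hx1'⟩, ⟨hy', by simpa using hy1'⟩⟩

theorem friedrichs_lt_one [FiniteDimensional ℝ H] : friedrichs U V < 1 := by
  obtain ⟨x, hx, y, hy, hx1, hy1, hc⟩ := exists_real_inner_eq_friedrichs (U := U) (V := V)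
  rw [hc]
  by_contra! h1
  have hxy : x = y := by
    rw [← sub_eq_zero, ← norm_le_zero_iff]
    nlinarith [norm_sub_sq_real x y, norm_nonneg x, norm_nonneg y, norm_nonneg (x - y)]
  have hx0 : x ∈ (U ⊓ V) ⊓ (U ⊓ V)ᗮ := ⟨⟨hx.1, hxy ▸ hy.1⟩, hx.2⟩
  rw [Submodule.inf_orthogonal_eq_bot, Submodule.mem_bot] at hx0
  norm_num [hx0] at h1

theorem norm_starProjection_le_friedrichs_mul [V.HasOrthogonalProjection] {x : H}
    (hx : x ∈ U ⊓ (U ⊓ V)ᗮ) : ‖V.starProjection x‖ ≤ friedrichs U V * ‖x‖ := by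
  set p := V.starProjection x
  have hp : p ∈ V ⊓ (U ⊓ V)ᗮ :=
    ⟨V.starProjection_apply_mem x, Submodule.starProjection_mem_orthogonal_of_le inf_le_right hx.2⟩
  have hxp : ⟪x, p⟫ = ‖p‖ ^ 2 := by
    rw [real_inner_comm]
    simpa using V.re_inner_starProjection_eq_normSq x
  rcases (norm_nonneg p).eq_or_lt with hp0 | hp0
  · rw [← hp0]
    exact mul_nonneg friedrichs_nonneg (norm_nonneg x)
  · refine le_of_mul_le_mul_right ?_ hp0
    calc ‖p‖ * ‖p‖ = ⟪x, p⟫ := by rw [hxp, sq]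
      _ ≤ friedrichs U V * (‖x‖ * ‖p‖) := real_inner_le_friedrichs_mul hx hp
      _ = friedrichs U V * ‖x‖ * ‖p‖ := by ring

theorem infDist_div_max_infDist_eq [V.HasOrthogonalProjection] [(U ⊓ V).HasOrthogonalProjection]
    {x : H} (hx : x ∈ U ⊓ (U ⊓ V)ᗮ) :
    infDist x ((U ⊓ V : Submodule ℝ H) : Set H) /
        max (infDist x (U : Set H)) (infDist x (V : Set H)) =
      ‖x‖ / ‖x - V.starProjection x‖ := by
  rw [Submodule.infDist_eq_norm_of_mem_orthogonal hx.2, infDist_zero_of_mem hx.1,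
    V.infDist_eq_norm_sub_starProjection, max_eq_right (norm_nonneg _)]

end Friedrichs

theorem stmt13 {D : ℕ} (U V : Submodule ℝ (EuclideanSpace ℝ (Fin D)))
    (u : EuclideanSpace ℝ (Fin D)) (hu : u ∈ U ⊓ (U ⊓ V)ᗮ) (hu0 : u ≠ 0)
    (κu : ℝ)
    (hκu : κu = infDist u ((U ⊓ V : Submodule ℝ (EuclideanSpace ℝ (Fin D))) :
        Set (EuclideanSpace ℝ (Fin D))) /
      max (infDist u (U : Set (EuclideanSpace ℝ (Fin D))))
        (infDist u (V : Set (EuclideanSpace ℝ (Fin D))))) :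
    ‖(Submodule.orthogonalProjection V u : EuclideanSpace ℝ (Fin D))‖ ≤ friedrichs U V * ‖u‖ ∧
    κu ≤ (Real.sqrt (1 - friedrichs U V ^ 2))⁻¹ ∧
    (κu = (Real.sqrt (1 - friedrichs U V ^ 2))⁻¹ ↔
      ‖(Submodule.orthogonalProjection V u : EuclideanSpace ℝ (Fin D))‖ = friedrichs U V * ‖u‖) := by
  have hr : 0 < ‖u‖ := norm_pos_iff.mpr hu0
  have ha := norm_starProjection_le_friedrichs_mul hu
  have hratio : ‖V.starProjection u‖ / ‖u‖ ∈ Set.Ico 0 1 :=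
    ⟨by positivity, ((div_le_iff₀ hr).mpr ha).trans_lt friedrichs_lt_one⟩
  have hc : friedrichs U V ∈ Set.Ico 0 1 := ⟨friedrichs_nonneg, friedrichs_lt_one⟩
  rw [Submodule.coe_orthogonalProjectionOnto_apply, hκu, infDist_div_max_infDist_eq hu,
    V.norm_div_norm_sub_starProjection hu0]
  exact ⟨ha, strictMonoOn_inv_sqrt_one_sub_sq.monotoneOn hratio hc ((div_le_iff₀ hr).mpr ha),
    (strictMonoOn_inv_sqrt_one_sub_sq.injOn.eq_iff hratio hc).trans (div_eq_iff hr.ne')⟩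
end
end

section
/- Let F₁, …, F_R be submodular functions on a ground set V of N elements with F_r(∅) = 0, and let F = Σ_r F_r with Lovász extension f. If (a*, b*) minimizes ‖a − b‖² over (a,b) ∈ 𝒜 × ℬ, then the point x* = −Σ_{r=1}^R (b*)_r is the (unique) minimizer over x ∈ ℝ^N of f(x) + ½‖x‖². -/
open scoped RealInnerProductSpace
open Finset

noncomputable section

/-- A submodular set function on `Fin N` with `F ∅ = 0`. -/
def IsSubmodular {N : ℕ} (F : Finset (Fin N) → ℝ) : Prop :=
  F ∅ = 0 ∧ ∀ A B : Finset (Fin N), F (A ∪ B) + F (A ∩ B) ≤ F A + F B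

/-- The base polytope of a set function. -/
def basePolytope {N : ℕ} (F : Finset (Fin N) → ℝ) :
    Set (EuclideanSpace ℝ (Fin N)) :=
  {s | (∀ A : Finset (Fin N), ∑ n ∈ A, s n ≤ F A) ∧ ∑ n, s n = F univ}

/-- The subspace 𝒜 = {(a₁, …, a_R) : Σ_r a_r = 0} of ℝ^{NR}. -/
def calA (N R : ℕ) : Set (EuclideanSpace ℝ (Fin R × Fin N)) :=
  {a | ∀ n : Fin N, ∑ r : Fin R, a (r, n) = 0}

/-- The product ℬ = B(F₁) × ⋯ × B(F_R) of base polytopes in ℝ^{NR}. -/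
def calB {N R : ℕ} (F : Fin R → Finset (Fin N) → ℝ) :
    Set (EuclideanSpace ℝ (Fin R × Fin N)) :=
  {b | ∀ r : Fin R, WithLp.toLp 2 (fun n => b (r, n)) ∈ basePolytope (F r)}

/-- `y` is the nearest-point projection of `x` onto `C`. -/
def IsProjOn {X : Type*} [MetricSpace X] (C : Set X) (x y : X) : Prop :=
  y ∈ C ∧ ∀ z ∈ C, dist x y ≤ dist x z

/-- The Lovász extension `f(x) = max_{s ∈ B(F)} sᵀx` of a set function. -/
def lovasz {N : ℕ} (F : Finset (Fin N) → ℝ) (x : EuclideanSpace ℝ (Fin N)) : ℝ :=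
  sSup {t | ∃ s ∈ basePolytope F, t = ⟪s, x⟫}

/-!
Every `a ∈ 𝒜` has block sum `Σ_r a_r = 0`, so Cauchy–Schwarz gives `‖Σ_r b*_r‖² ≤ R ‖a* - b*‖²`,
and `a = b - (Σ_r b_r) / R` attains `R ‖a - b‖² = ‖Σ_r b_r‖²`. Hence `s* = Σ_r b*_r` has minimal norm
in the convex set `{Σ_r b_r : b ∈ ℬ}`, i.e. `‖s*‖² ≤ ⟪s*, t⟫` on it. Edmonds' greedy algorithm
computes `f(x) = ⟪g, x⟫` for a vertex `g` of `B(F)` which is the block sum of the greedy vertices of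
the `B(F_r)`, so `f(-s*) ≤ -‖s*‖²`, while `f(z) ≥ ⟪s*, z⟫` because `s* ∈ B(F)`. Therefore
`f(z) + ‖z‖²/2 ≥ ‖z + s*‖²/2 + f(-s*) + ‖s*‖²/2`, and `x* = -s*` is the unique minimizer.
-/

theorem norm_sq_le_inner_of_forall_norm_le {E : Type*} [NormedAddCommGroup E]
    [InnerProductSpace ℝ E] {C : Set E} (hC : Convex ℝ C) {s : E} (hs : s ∈ C)
    (hmin : ∀ t ∈ C, ‖s‖ ≤ ‖t‖) {t : E} (ht : t ∈ C) : ‖s‖ ^ 2 ≤ ⟪s, t⟫ := by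
  have : Nonempty C := ⟨⟨s, hs⟩⟩
  have hproj : ‖0 - s‖ = ⨅ w : C, ‖0 - (w : E)‖ :=
    le_antisymm (le_ciInf fun w => by simpa using hmin w w.2)
      (ciInf_le (f := fun w : C => ‖0 - (w : E)‖)
        ⟨0, Set.forall_mem_range.2 fun _ => norm_nonneg _⟩ ⟨s, hs⟩)
  have h := (norm_eq_iInf_iff_real_inner_le_zero hC hs).mp hproj t ht
  rw [zero_sub, inner_neg_left, inner_sub_right, real_inner_self_eq_norm_sq] at h
  linarith

theorem min_add_half_norm_sq_at_neg_of_inner_le {E : Type*} [NormedAddCommGroup E]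
    [InnerProductSpace ℝ E] {f : E → ℝ} {s : E} (hlow : ∀ z, ⟪s, z⟫ ≤ f z)
    (hup : f (-s) ≤ -‖s‖ ^ 2) :
    (∀ z, f (-s) + ‖-s‖ ^ 2 / 2 ≤ f z + ‖z‖ ^ 2 / 2) ∧
      ∀ z, f z + ‖z‖ ^ 2 / 2 = f (-s) + ‖-s‖ ^ 2 / 2 → z = -s := by
  have key (z : E) : ‖z + s‖ ^ 2 / 2 + (f (-s) + ‖-s‖ ^ 2 / 2) ≤ f z + ‖z‖ ^ 2 / 2 := by
    rw [norm_neg, norm_add_sq_real, real_inner_comm]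
    linarith [hlow z]
  refine ⟨fun z => by linarith [key z, sq_nonneg ‖z + s‖], fun z hz => ?_⟩
  have : ‖z + s‖ ^ 2 ≤ 0 := by linarith [key z]
  rwa [← sub_neg_eq_add, sq_nonpos_iff, norm_eq_zero, sub_eq_zero] at this

theorem EuclideanSpace.real_inner_eq_sum {ι : Type*} [Fintype ι] (x y : EuclideanSpace ℝ ι) :
    ⟪x, y⟫ = ∑ i, x i * y i := by
  simp only [PiLp.inner_apply, RCLike.inner_apply, Real.ringHom_apply, mul_comm]

theorem exists_perm_antitone {α : Type*} [LinearOrder α] {N : ℕ} (x : Fin N → α) :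
    ∃ σ : Equiv.Perm (Fin N), Antitone (x ∘ σ) :=
  ⟨Tuple.sort (OrderDual.toDual ∘ x), monotone_toDual_comp_iff.mp (Tuple.monotone_sort _)⟩

theorem IsSubmodular.sum {N : ℕ} {ι : Type*} (s : Finset ι) {F : ι → Finset (Fin N) → ℝ}
    (hF : ∀ i, IsSubmodular (F i)) : IsSubmodular fun A => ∑ i ∈ s, F i A :=
  ⟨Finset.sum_eq_zero fun i _ => (hF i).1, fun A B => by
    rw [← Finset.sum_add_distrib, ← Finset.sum_add_distrib]
    exact Finset.sum_le_sum fun i _ => (hF i).2 A B⟩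

theorem IsSubmodular.insert_sub_le_insert_sub {N : ℕ} {F : Finset (Fin N) → ℝ}
    (hF : IsSubmodular F) {S T : Finset (Fin N)} {a : Fin N} (hTS : T ⊆ S) (ha : a ∉ S) :
    F (insert a S) - F S ≤ F (insert a T) - F T := by
  have h := hF.2 (insert a T) S
  rw [Finset.insert_union, Finset.union_eq_right.mpr hTS, Finset.insert_inter_of_notMem ha,
    Finset.inter_eq_left.mpr hTS] at h
  linarith

theorem convex_basePolytope {N : ℕ} (F : Finset (Fin N) → ℝ) : Convex ℝ (basePolytope F) := by
  intro s hs t ht a b ha hb hab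
  refine ⟨fun A => ?_, ?_⟩ <;>
    simp only [PiLp.add_apply, PiLp.smul_apply, smul_eq_mul, sum_add_distrib, ← mul_sum]
  · calc a * ∑ n ∈ A, s n + b * ∑ n ∈ A, t n ≤ a * F A + b * F A := by
          gcongr
          exacts [hs.1 A, ht.1 A]
      _ = F A := by rw [← add_mul, hab, one_mul]
  · rw [hs.2, ht.2, ← add_mul, hab, one_mul]

section Greedy

variable {N : ℕ} (σ : Equiv.Perm (Fin N))

/-- `S_k = {σ 0, …, σ (k - 1)}`. -/
def prefixSet (k : ℕ) : Finset (Fin N) :=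
  univ.filter fun n => (σ.symm n : ℕ) < k

theorem mem_prefixSet {k : ℕ} {n : Fin N} : n ∈ prefixSet σ k ↔ (σ.symm n : ℕ) < k := by
  simp [prefixSet]

@[simp] theorem prefixSet_zero : prefixSet σ 0 = ∅ := by
  simp [prefixSet]

@[simp] theorem prefixSet_card : prefixSet σ N = univ := by
  ext n; simp [mem_prefixSet]

theorem apply_notMem_prefixSet {k : ℕ} (hk : k < N) : σ ⟨k, hk⟩ ∉ prefixSet σ k := by
  simp [mem_prefixSet]

theorem prefixSet_succ {k : ℕ} (hk : k < N) :
    prefixSet σ (k + 1) = insert (σ ⟨k, hk⟩) (prefixSet σ k) := by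
  ext n
  rw [mem_insert, mem_prefixSet, mem_prefixSet, Nat.lt_succ_iff_lt_or_eq, ← σ.symm_apply_eq,
    ← Fin.val_eq_val, or_comm]

theorem sum_prefixSet_succ {k : ℕ} (hk : k < N) (f : Fin N → ℝ) :
    ∑ n ∈ prefixSet σ (k + 1), f n = f (σ ⟨k, hk⟩) + ∑ n ∈ prefixSet σ k, f n := by
  rw [prefixSet_succ σ hk, sum_insert (apply_notMem_prefixSet σ hk)]

/-- Edmonds' greedy vertex of `B(F)` for the order `σ`: `s_{σ k} = F(S_{k+1}) - F(S_k)`. -/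
def greedy (F : Finset (Fin N) → ℝ) : EuclideanSpace ℝ (Fin N) :=
  WithLp.toLp 2 fun n => F (prefixSet σ (σ.symm n + 1)) - F (prefixSet σ (σ.symm n))

variable {σ} {F : Finset (Fin N) → ℝ}

theorem greedy_apply_apply {k : ℕ} (hk : k < N) :
    greedy σ F (σ ⟨k, hk⟩) = F (prefixSet σ (k + 1)) - F (prefixSet σ k) := by
  simp [greedy]

theorem sum_greedy_prefixSet (hF0 : F ∅ = 0) {k : ℕ} (hk : k ≤ N) :
    ∑ n ∈ prefixSet σ k, greedy σ F n = F (prefixSet σ k) := by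
  induction k with
  | zero => simp [hF0]
  | succ k ih =>
    rw [sum_prefixSet_succ σ hk, greedy_apply_apply hk, ih (by omega)]
    ring

theorem sum_greedy_inter_prefixSet_le (hF : IsSubmodular F)
    (A : Finset (Fin N)) {k : ℕ} (hk : k ≤ N) :
    ∑ n ∈ A ∩ prefixSet σ k, greedy σ F n ≤ F (A ∩ prefixSet σ k) := by
  induction k with
  | zero => simp [hF.1]
  | succ k ih =>
    have ih := ih (by omega)
    have hnot := apply_notMem_prefixSet σ hk
    rw [prefixSet_succ σ hk]
    by_cases ha : σ ⟨k, hk⟩ ∈ A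
    · have hmarg := hF.insert_sub_le_insert_sub (inter_subset_right (s₁ := A)) hnot
      rw [inter_insert_of_mem ha, sum_insert fun h => hnot (mem_inter.mp h).2,
        greedy_apply_apply hk, prefixSet_succ σ hk]
      linarith
    · rwa [inter_insert_of_notMem ha]

theorem greedy_mem_basePolytope (hF : IsSubmodular F) :
    greedy σ F ∈ basePolytope F := by
  refine ⟨fun A => ?_, ?_⟩
  · simpa using sum_greedy_inter_prefixSet_le hF A le_rfl (σ := σ)
  · simpa using sum_greedy_prefixSet hF.1 le_rfl (σ := σ)

variable {s x : EuclideanSpace ℝ (Fin N)}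

/-- Abel summation along the chain `S_k`: the partial slacks `F(S_k) - s(S_k)` are nonnegative and
`x ∘ σ` is antitone. -/
theorem slack_mul_le_sum_prefixSet (hF0 : F ∅ = 0) (hs : s ∈ basePolytope F)
    (hx : Antitone (x ∘ σ)) {k : ℕ} (hk : k ≤ N) {y : ℝ}
    (hy : ∀ j : Fin N, (j : ℕ) < k → y ≤ x (σ j)) :
    (F (prefixSet σ k) - ∑ n ∈ prefixSet σ k, s n) * y ≤
      ∑ n ∈ prefixSet σ k, (greedy σ F n - s n) * x n := by
  induction k generalizing y with
  | zero => simp [hF0]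
  | succ k ih =>
    have ih := ih (by omega) (y := x (σ ⟨k, hk⟩)) fun j hj => hx (Fin.mk_le_mk.mpr hj.le)
    have hslack := hs.1 (prefixSet σ (k + 1))
    have hyk := hy ⟨k, hk⟩ (Nat.lt_succ_self k)
    rw [sum_prefixSet_succ σ hk] at hslack ⊢
    rw [sum_prefixSet_succ σ hk, greedy_apply_apply hk]
    nlinarith

theorem inner_le_inner_greedy (hF0 : F ∅ = 0) (hs : s ∈ basePolytope F)
    (hx : Antitone (x ∘ σ)) : ⟪s, x⟫ ≤ ⟪greedy σ F, x⟫ := by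
  obtain ⟨y, hy⟩ := (Set.finite_range (x ∘ σ)).bddBelow
  have h := slack_mul_le_sum_prefixSet hF0 hs hx le_rfl fun j _ => hy ⟨j, rfl⟩
  rw [prefixSet_card, hs.2, sub_self, zero_mul] at h
  simp only [sub_mul, sum_sub_distrib, sub_nonneg] at h
  simpa only [EuclideanSpace.real_inner_eq_sum] using h

theorem isGreatest_inner_greedy (hF : IsSubmodular F) (hx : Antitone (x ∘ σ)) :
    IsGreatest {t | ∃ s ∈ basePolytope F, t = ⟪s, x⟫} ⟪greedy σ F, x⟫ :=
  ⟨⟨_, greedy_mem_basePolytope hF, rfl⟩, by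
    rintro _ ⟨s, hs, rfl⟩
    exact inner_le_inner_greedy hF.1 hs hx⟩

theorem lovasz_eq_inner_greedy (hF : IsSubmodular F) (hx : Antitone (x ∘ σ)) :
    lovasz F x = ⟪greedy σ F, x⟫ :=
  (isGreatest_inner_greedy hF hx).csSup_eq

theorem inner_le_lovasz (hF : IsSubmodular F) (hs : s ∈ basePolytope F) :
    ⟪s, x⟫ ≤ lovasz F x := by
  obtain ⟨σ, hσ⟩ := exists_perm_antitone x
  rw [lovasz_eq_inner_greedy hF hσ]
  exact (isGreatest_inner_greedy hF hσ).2 ⟨s, hs, rfl⟩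

end Greedy

section BlockSum

variable {N R : ℕ}

/-- `b ↦ Σ_r b_r`, the sum of the `R` blocks of a vector of `ℝ^{NR}`. -/
def blockSum : EuclideanSpace ℝ (Fin R × Fin N) →ₗ[ℝ] EuclideanSpace ℝ (Fin N) where
  toFun b := WithLp.toLp 2 fun n => ∑ r, b (r, n)
  map_add' b c := by ext n; simp [sum_add_distrib]
  map_smul' a b := by ext n; simp [mul_sum]

@[simp] theorem blockSum_apply (b : EuclideanSpace ℝ (Fin R × Fin N)) (n : Fin N) :
    blockSum b n = ∑ r, b (r, n) := rfl

theorem blockSum_eq_zero_of_mem_calA {a : EuclideanSpace ℝ (Fin R × Fin N)} (ha : a ∈ calA N R) :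
    blockSum a = 0 := by
  ext n; simp [ha n]

theorem norm_sq_eq_sum_sum (c : EuclideanSpace ℝ (Fin R × Fin N)) :
    ‖c‖ ^ 2 = ∑ n, ∑ r, c (r, n) ^ 2 := by
  simp only [EuclideanSpace.norm_sq_eq, Real.norm_eq_abs, sq_abs, Fintype.sum_prod_type]
  exact sum_comm

theorem norm_blockSum_sq_le (c : EuclideanSpace ℝ (Fin R × Fin N)) :
    ‖blockSum c‖ ^ 2 ≤ R * ‖c‖ ^ 2 := by
  rw [norm_sq_eq_sum_sum, EuclideanSpace.norm_sq_eq, mul_sum]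
  refine sum_le_sum fun n _ => ?_
  simpa [sq_abs] using sq_sum_le_card_mul_sum_sq (s := univ) (f := fun r => c (r, n))

theorem exists_mem_calA_mul_norm_sub_sq_eq (b : EuclideanSpace ℝ (Fin R × Fin N)) :
    ∃ a ∈ calA N R, R * ‖a - b‖ ^ 2 = ‖blockSum b‖ ^ 2 := by
  rcases Nat.eq_zero_or_pos R with rfl | hR
  · exact ⟨0, fun n => by simp, by simp [EuclideanSpace.norm_sq_eq]⟩
  have hR' : (R : ℝ) ≠ 0 := by positivity
  refine ⟨b - WithLp.toLp 2 fun p => blockSum b p.2 / R, fun n => ?_, ?_⟩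
  · simp [sum_sub_distrib, mul_div_cancel₀ _ hR']
  · rw [norm_sq_eq_sum_sum, EuclideanSpace.norm_sq_eq, mul_sum]
    refine sum_congr rfl fun n _ => ?_
    simp only [sub_sub_cancel_left, PiLp.neg_apply, neg_sq, sum_const, card_univ,
      Fintype.card_fin, nsmul_eq_mul, Real.norm_eq_abs, sq_abs]
    field_simp

variable {F : Fin R → Finset (Fin N) → ℝ}

theorem convex_calB : Convex ℝ (calB F) := by
  intro b hb c hc θ μ hθ hμ hθμ r
  exact convex_basePolytope (F r) (hb r) (hc r) hθ hμ hθμ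

theorem blockSum_mem_basePolytope_sum {b : EuclideanSpace ℝ (Fin R × Fin N)} (hb : b ∈ calB F) :
    blockSum b ∈ basePolytope fun A => ∑ r, F r A := by
  refine ⟨fun A => ?_, ?_⟩ <;> simp only [blockSum_apply] <;> rw [sum_comm]
  · exact sum_le_sum fun r _ => (hb r).1 A
  · exact sum_congr rfl fun r _ => (hb r).2

theorem exists_mem_calB_blockSum_eq_greedy (hF : ∀ r, IsSubmodular (F r))
    (σ : Equiv.Perm (Fin N)) :
    ∃ b ∈ calB F, blockSum b = greedy σ fun A => ∑ r, F r A :=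
  ⟨WithLp.toLp 2 fun p => greedy σ (F p.1) p.2, fun r => greedy_mem_basePolytope (hF r), by
    ext n; simp [greedy, sum_sub_distrib]⟩

theorem norm_blockSum_le_of_forall_norm_sub_sq_le {B : Set (EuclideanSpace ℝ (Fin R × Fin N))}
    {astar bstar : EuclideanSpace ℝ (Fin R × Fin N)} (hastar : astar ∈ calA N R)
    (hmin : ∀ a ∈ calA N R, ∀ b ∈ B, ‖astar - bstar‖ ^ 2 ≤ ‖a - b‖ ^ 2)
    {b : EuclideanSpace ℝ (Fin R × Fin N)} (hb : b ∈ B) :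
    ‖blockSum bstar‖ ≤ ‖blockSum b‖ := by
  obtain ⟨a, ha, hab⟩ := exists_mem_calA_mul_norm_sub_sq_eq b
  refine le_of_sq_le_sq ?_ (norm_nonneg _)
  calc ‖blockSum bstar‖ ^ 2 = ‖blockSum (astar - bstar)‖ ^ 2 := by
        rw [map_sub, blockSum_eq_zero_of_mem_calA hastar, zero_sub, norm_neg]
    _ ≤ R * ‖astar - bstar‖ ^ 2 := norm_blockSum_sq_le _
    _ ≤ R * ‖a - b‖ ^ 2 := mul_le_mul_of_nonneg_left (hmin a ha b hb) (Nat.cast_nonneg R)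
    _ = ‖blockSum b‖ ^ 2 := hab

end BlockSum

theorem stmt18 {N R : ℕ}
    (F : Fin R → Finset (Fin N) → ℝ) (hF : ∀ r, IsSubmodular (F r))
    (Fsum : Finset (Fin N) → ℝ) (hFsum : ∀ A, Fsum A = ∑ r, F r A)
    (astar bstar : EuclideanSpace ℝ (Fin R × Fin N))
    (hastar : astar ∈ calA N R) (hbstar : bstar ∈ calB F)
    (hmin : ∀ a' ∈ calA N R, ∀ b' ∈ calB F,
      ‖astar - bstar‖ ^ 2 ≤ ‖a' - b'‖ ^ 2)
    (xstar : EuclideanSpace ℝ (Fin N))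
    (hxstar : ∀ n, xstar n = -∑ r : Fin R, bstar (r, n)) :
    (∀ z : EuclideanSpace ℝ (Fin N),
      lovasz Fsum xstar + ‖xstar‖ ^ 2 / 2 ≤ lovasz Fsum z + ‖z‖ ^ 2 / 2) ∧
    ∀ z : EuclideanSpace ℝ (Fin N),
      lovasz Fsum z + ‖z‖ ^ 2 / 2 = lovasz Fsum xstar + ‖xstar‖ ^ 2 / 2 →
        z = xstar := by
  obtain rfl : Fsum = fun A => ∑ r, F r A := funext hFsum
  obtain rfl : xstar = -blockSum bstar := by ext n; simp [hxstar]
  have hFsub := IsSubmodular.sum univ hF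
  have hvar {t} (ht : t ∈ blockSum '' calB F) : ‖blockSum bstar‖ ^ 2 ≤ ⟪blockSum bstar, t⟫ :=
    norm_sq_le_inner_of_forall_norm_le (convex_calB.linear_image _) ⟨bstar, hbstar, rfl⟩
      (by rintro _ ⟨b, hb, rfl⟩; exact norm_blockSum_le_of_forall_norm_sub_sq_le hastar hmin hb) ht
  refine min_add_half_norm_sq_at_neg_of_inner_le
    (fun z => inner_le_lovasz hFsub (blockSum_mem_basePolytope_sum hbstar)) ?_
  obtain ⟨σ, hσ⟩ := exists_perm_antitone (-blockSum bstar)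
  obtain ⟨b, hb, hbσ⟩ := exists_mem_calB_blockSum_eq_greedy hF σ
  rw [lovasz_eq_inner_greedy hFsub hσ, ← hbσ, inner_neg_right, real_inner_comm, neg_le_neg_iff]
  exact hvar ⟨b, hb, rfl⟩
end
end
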